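/- Monotonicity of flow and transfer function in the inflow: for a flow graph h and inflows in₁ ≤ in₂ (pointwise in the natural order), (i) h[in₁].flow ≤ h[in₂].flow pointwise, and (ii) tf(h)(in₁)(y) ≤ tf(h)(in₂)(y) for every node y outside h.X, where h[inᵢ] denotes h with its inflow replaced by inᵢ. -/

import Mathlib

universe u

/-- A flow monoid: a commutative monoid whose natural order
(`m ≤ n ↔ ∃ o, n = m + o`) is a partial order that forms an ω-cpo, with
continuous addition. `csup` assigns to every ascending chain its join. -/
class FlowMonoid (M : Type u) extends AddCommMonoid M, PartialOrder M, IsOrderedAddMonoid M,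
    CanonicallyOrderedAdd M, OrderBot M where
  /-- The join of an ascending chain. -/
  csup : (ℕ → M) → M
  isLUB_csup : ∀ K : ℕ → M, Monotone K → IsLUB (Set.range K) (csup K)
  add_csup : ∀ (n : M) (K : ℕ → M), Monotone K → n + csup K = csup fun i => n + K i

variable {M : Type u} [FlowMonoid M]

/-- Continuity: `f` commutes with joins of ascending chains. -/
def FMCont (f : M → M) : Prop :=
  ∀ K : ℕ → M, Monotone K →
    IsLUB (Set.range fun i => f (K i)) (f (FlowMonoid.csup K))

/-- A flow graph: a finite set of nodes `X ⊆ ℕ`, continuous edge functions, and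
a finitely supported inflow from sources outside `X` into `X`. (The edge
functions of sources outside `X` and the inflow outside its domain are
canonically zero.) -/
structure FlowGraph (M : Type u) [FlowMonoid M] where
  /-- The nodes. -/
  X : Finset ℕ
  /-- The edge functions: `E x y` labels the edge from `x` to `y`. -/
  E : ℕ → ℕ → M → M
  /-- The inflow: `inflow y x` is the flow the graph receives at `x ∈ X` from the
  external node `y ∉ X`. -/
  inflow : ℕ → ℕ → M
  econt : ∀ x y, x ∈ X → FMCont (E x y)
  edom : ∀ x y, x ∉ X → E x y = fun _ => 0
  inflow_fin : ∀ x, (Function.support fun y => inflow y x).Finite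
  inflow_dom : ∀ y x, inflow y x ≠ 0 → y ∉ X ∧ x ∈ X

namespace FlowGraph

/-- One step of the flow fixed-point computation, with inflow `i`. -/
noncomputable def stepWith (h : FlowGraph M) (i : ℕ → ℕ → M) (c : ℕ → M) : ℕ → M :=
  fun x => if x ∈ h.X then (∑ᶠ y, i y x) + ∑ y ∈ h.X, h.E y x (c y) else 0

/-- The flow for a custom inflow `i`, obtained by Kleene iteration: the least
function satisfying the flow equation. -/
noncomputable def flowWith (h : FlowGraph M) (i : ℕ → ℕ → M) : ℕ → M :=
  fun x => FlowMonoid.csup fun n => (h.stepWith i)^[n] (fun _ => 0) x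

/-- The flow of a flow graph. -/
noncomputable def flow (h : FlowGraph M) : ℕ → M := h.flowWith h.inflow

/-- The outflow of a flow graph: `out x y = E x y (flow x)`. -/
noncomputable def out (h : FlowGraph M) (x y : ℕ) : M := h.E x y (h.flow x)

/-- The transfer function: maps an inflow `i` to the resulting outflow at `y`. -/
noncomputable def tf (h : FlowGraph M) (i : ℕ → ℕ → M) (y : ℕ) : M :=
  ∑ x ∈ h.X, h.E x y (h.flowWith i x)

/-- The ghost multiplication of flow graphs: disjoint union of the node sets and
edges; the inflow of each component is restricted to sources outside the other. -/
def gmul (s t : FlowGraph M) : FlowGraph M where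
  X := s.X ∪ t.X
  E := fun x y => if x ∈ s.X then s.E x y else t.E x y
  inflow := fun y x => if y ∈ s.X ∪ t.X then 0 else s.inflow y x + t.inflow y x
  econt := by
    intro x y hx
    try dsimp only
    by_cases hs : x ∈ s.X
    · rw [if_pos hs]; exact s.econt x y hs
    · rw [if_neg hs]
      rcases Finset.mem_union.mp hx with h | h
      · exact absurd h hs
      · exact t.econt x y h
  edom := by
    intro x y hx
    try dsimp only
    rw [if_neg fun h => hx (Finset.mem_union_left _ h)]
    exact t.edom x y fun h => hx (Finset.mem_union_right _ h)
  inflow_fin := by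
    intro x
    refine Set.Finite.subset ((s.inflow_fin x).union (t.inflow_fin x)) ?_
    intro y hy
    rw [Function.mem_support] at hy
    try dsimp only at hy
    by_cases hmem : y ∈ s.X ∪ t.X
    · rw [if_pos hmem] at hy; exact absurd rfl hy
    · rw [if_neg hmem] at hy
      by_cases h1 : s.inflow y x = 0
      · have h2 : t.inflow y x ≠ 0 := fun h2 => hy (by rw [h1, h2, add_zero])
        exact Set.mem_union_right _ (Function.mem_support.mpr h2)
      · exact Set.mem_union_left _ (Function.mem_support.mpr h1)
  inflow_dom := by
    intro y x hy
    try dsimp only at hy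
    by_cases hmem : y ∈ s.X ∪ t.X
    · rw [if_pos hmem] at hy; exact absurd rfl hy
    · rw [if_neg hmem] at hy
      refine ⟨hmem, ?_⟩
      by_cases h1 : s.inflow y x = 0
      · have h2 : t.inflow y x ≠ 0 := fun h2 => hy (by rw [h1, h2, add_zero])
        exact Finset.mem_union_right _ (t.inflow_dom y x h2).2
      · exact Finset.mem_union_left _ (s.inflow_dom y x h1).2

/-- Definedness of the multiplication `s ⋆ t` of flow graphs: the ghost
multiplication is defined, the inflow expectation of each graph at the mutual
boundary matches the outflow of the other, and the flows are preserved in the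
composition (whose result is then `gmul s t`). -/
def MDef (s t : FlowGraph M) : Prop :=
  Disjoint s.X t.X ∧
  (∀ x ∈ s.X, ∀ y ∈ t.X, s.out x y = t.inflow x y ∧ t.out y x = s.inflow y x) ∧
  (∀ x ∈ s.X, (gmul s t).flow x = s.flow x) ∧
  (∀ y ∈ t.X, (gmul s t).flow y = t.flow y)

end FlowGraph

/-- `i` is an inflow for the node set `X`: finitely supported, from sources
outside `X` into `X`. -/
def IsInflow (X : Finset ℕ) (i : ℕ → ℕ → M) : Prop :=
  (∀ x, (Function.support fun y => i y x).Finite) ∧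
  (∀ y x, i y x ≠ 0 → y ∉ X ∧ x ∈ X)

/-!
The flow is the join of the Kleene iterates of the step map `c ↦ in + Σ E(c)`. Continuous edge
functions are monotone, so the step map is monotone in the current flow and, for finitely
supported inflows, also in the inflow; hence the iterates for `in₁` stay below those for `in₂`,
and so do their joins. The transfer function applies the monotone edge functions to the flow.
-/

theorem FMCont.monotone {f : M → M} (hf : FMCont f) : Monotone f := by
  intro a b hab
  -- continuity at the chain `a, b, b, …`, whose join is `b`
  let K : ℕ → M := fun n => if n = 0 then a else b
  have hK : Monotone K := monotone_nat_of_le_succ fun n => by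
    rcases n with _ | n <;> simp [K, hab]
  have hsup : FlowMonoid.csup K = b := by
    refine (FlowMonoid.isLUB_csup K hK).unique (IsGreatest.isLUB ⟨⟨1, rfl⟩, ?_⟩)
    rintro _ ⟨n, rfl⟩
    rcases n with _ | n <;> simp [K, hab]
  simpa [K, hsup] using (hf K hK).1 ⟨0, rfl⟩

theorem FlowMonoid.csup_mono {K₁ K₂ : ℕ → M} (h₁ : Monotone K₁) (h₂ : Monotone K₂)
    (h : K₁ ≤ K₂) : csup K₁ ≤ csup K₂ :=
  (isLUB_csup K₁ h₁).2 <| by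
    rintro _ ⟨n, rfl⟩
    exact (h n).trans ((isLUB_csup K₂ h₂).1 ⟨n, rfl⟩)

namespace FlowGraph

variable (h : FlowGraph M)

theorem monotone_stepWith (i : ℕ → ℕ → M) : Monotone (h.stepWith i) := by
  intro c₁ c₂ hc x
  unfold stepWith
  split_ifs
  · gcongr with y hy
    exact (h.econt y x hy).monotone (hc y)
  · rfl

theorem stepWith_mono_inflow {i₁ i₂ : ℕ → ℕ → M}
    (hi₁ : ∀ x, (Function.support fun y => i₁ y x).Finite)
    (hi₂ : ∀ x, (Function.support fun y => i₂ y x).Finite) (hi : i₁ ≤ i₂) :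
    h.stepWith i₁ ≤ h.stepWith i₂ := by
  intro c x
  unfold stepWith
  split_ifs
  · gcongr
    exact finsum_le_finsum' (hi₁ x) (hi₂ x) fun y => hi y x
  · rfl

theorem monotone_iterate_stepWith (i : ℕ → ℕ → M) (x : ℕ) :
    Monotone fun n => (h.stepWith i)^[n] (fun _ => 0) x :=
  (Function.monotone_eval x).comp <|
    (h.monotone_stepWith i).monotone_iterate_of_le_map fun _ => zero_le

theorem flowWith_mono {i₁ i₂ : ℕ → ℕ → M}
    (hi₁ : ∀ x, (Function.support fun y => i₁ y x).Finite)
    (hi₂ : ∀ x, (Function.support fun y => i₂ y x).Finite) (hi : i₁ ≤ i₂) :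
    h.flowWith i₁ ≤ h.flowWith i₂ := fun x =>
  FlowMonoid.csup_mono (h.monotone_iterate_stepWith i₁ x) (h.monotone_iterate_stepWith i₂ x)
    fun n => (h.monotone_stepWith i₁).iterate_le_of_le (h.stepWith_mono_inflow hi₁ hi₂ hi) n _ x

theorem tf_le_tf_of_flowWith_le {i₁ i₂ : ℕ → ℕ → M} (hflow : h.flowWith i₁ ≤ h.flowWith i₂) :
    h.tf i₁ ≤ h.tf i₂ := fun y =>
  Finset.sum_le_sum fun x hx => (h.econt x y hx).monotone (hflow x)

end FlowGraph

open FlowGraph in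
/-- Monotonicity of flow and transfer function in the inflow:
if `in₁ ≤ in₂` pointwise, then the flows and the transfer-function values are
related pointwise in the natural order. -/
theorem flow_tf_monotone_in_inflow (h : FlowGraph M) (i₁ i₂ : ℕ → ℕ → M)
    (hi₁ : IsInflow h.X i₁) (hi₂ : IsInflow h.X i₂)
    (hle : ∀ y x, i₁ y x ≤ i₂ y x) :
    (∀ x, h.flowWith i₁ x ≤ h.flowWith i₂ x) ∧
    (∀ y, y ∉ h.X → h.tf i₁ y ≤ h.tf i₂ y) := by
  have hflow : h.flowWith i₁ ≤ h.flowWith i₂ := h.flowWith_mono hi₁.1 hi₂.1 hle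
  exact ⟨hflow, fun y _ => h.tf_le_tf_of_flowWith_le hflow y⟩
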